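/- arXiv:1408.4848 — 2 statements merged into one kernel-verified Lean document; each statement's English description precedes it below -/
import Mathlib

section
/- Neyman–Pearson type representation on a finite space: let Ω be finite with reference measure R of full support, and Z, G densities (nonnegative functions with E_R[Z] = E_R[G] = 1), F : Ω → (0,∞), and x ≥ 0. Then sup{ E_R[Zψ] : ψ : Ω → [0,1], E_R[GFψ] ≤ x } = inf_{a ≥ 0} ( xa + E_R[(Z − aGF)⁺] ). -/
theorem stmt_14 {Ω : Type*} [Fintype Ω] [Nonempty Ω] (R Z G F : Ω → ℝ)
    (hR : ∀ ω, 0 < R ω) (hRsum : ∑ ω, R ω = 1)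
    (hZ : ∀ ω, 0 ≤ Z ω) (hZ1 : ∑ ω, R ω * Z ω = 1)
    (hG : ∀ ω, 0 ≤ G ω) (hG1 : ∑ ω, R ω * G ω = 1)
    (hF : ∀ ω, 0 < F ω) (x : ℝ) (hx : 0 ≤ x) :
    sSup { e | ∃ ψ : Ω → ℝ, (∀ ω, ψ ω ∈ Set.Icc (0 : ℝ) 1) ∧
        (∑ ω, R ω * (G ω * F ω * ψ ω)) ≤ x ∧ e = ∑ ω, R ω * (Z ω * ψ ω) }
      = sInf { e | ∃ a : ℝ, 0 ≤ a ∧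
          e = x * a + ∑ ω, R ω * max (Z ω - a * (G ω * F ω)) 0 } := by
  classical
  set P : Set ℝ := { e | ∃ ψ : Ω → ℝ, (∀ ω, ψ ω ∈ Set.Icc (0 : ℝ) 1) ∧
        (∑ ω, R ω * (G ω * F ω * ψ ω)) ≤ x ∧ e = ∑ ω, R ω * (Z ω * ψ ω) } with hPdef
  set Q : Set ℝ := { e | ∃ a : ℝ, 0 ≤ a ∧
          e = x * a + ∑ ω, R ω * max (Z ω - a * (G ω * F ω)) 0 } with hQdef
  -- weak duality
  have weak : ∀ e ∈ P, ∀ f ∈ Q, e ≤ f := by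
    rintro e ⟨ψ, hψ, hbud, rfl⟩ f ⟨a, ha, rfl⟩
    have key : ∀ ω, R ω * (Z ω * ψ ω) ≤
        R ω * max (Z ω - a * (G ω * F ω)) 0 + a * (R ω * (G ω * F ω * ψ ω)) := by
      intro ω
      have h0 := (hψ ω).1
      have h1 := (hψ ω).2
      have hRω := (hR ω).le
      have hGF : 0 ≤ G ω * F ω := mul_nonneg (hG ω) (hF ω).le
      rcases le_or_gt (Z ω - a * (G ω * F ω)) 0 with h | h
      · rw [max_eq_right h]
        nlinarith [mul_nonneg (mul_nonneg hRω h0) (neg_nonneg.mpr h)]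
      · rw [max_eq_left h.le]
        nlinarith [mul_nonneg (mul_nonneg hRω h.le) (sub_nonneg.mpr h1)]
    calc ∑ ω, R ω * (Z ω * ψ ω)
        ≤ ∑ ω, (R ω * max (Z ω - a * (G ω * F ω)) 0 + a * (R ω * (G ω * F ω * ψ ω))) :=
          Finset.sum_le_sum fun ω _ => key ω
      _ = (∑ ω, R ω * max (Z ω - a * (G ω * F ω)) 0) + a * ∑ ω, R ω * (G ω * F ω * ψ ω) := by
          rw [Finset.sum_add_distrib, Finset.mul_sum]
      _ ≤ (∑ ω, R ω * max (Z ω - a * (G ω * F ω)) 0) + a * x := by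
          gcongr
      _ = x * a + ∑ ω, R ω * max (Z ω - a * (G ω * F ω)) 0 := by ring
  have hQne : Q.Nonempty :=
    ⟨x * 0 + ∑ ω, R ω * max (Z ω - 0 * (G ω * F ω)) 0, 0, le_refl 0, rfl⟩
  have hPne : P.Nonempty := by
    refine ⟨∑ ω, R ω * (Z ω * (0:ℝ)), fun _ => 0, fun ω => ⟨le_refl 0, zero_le_one⟩, ?_, rfl⟩
    simpa using hx
  have hPbdd : BddAbove P := by
    obtain ⟨f0, hf0⟩ := hQne
    exact ⟨f0, fun e he => weak e he f0 hf0⟩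
  have hQbdd : BddBelow Q := by
    refine ⟨0, ?_⟩
    rintro f ⟨a, ha, rfl⟩
    exact add_nonneg (mul_nonneg hx ha)
      (Finset.sum_nonneg fun ω _ => mul_nonneg (hR ω).le (le_max_right _ _))
  -- strong duality: construct a common element
  have strong : ∃ e, e ∈ P ∧ e ∈ Q := by
    set c : ℝ → ℝ := fun a => ∑ ω, if a * (G ω * F ω) < Z ω then R ω * (G ω * F ω) else 0
      with hc
    set A' : Finset ℝ :=
      insert 0 (Finset.univ.image (fun ω => if 0 < G ω then Z ω / (G ω * F ω) else 0)) with hA'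
    have hA'ne : A'.Nonempty := ⟨0, Finset.mem_insert_self _ _⟩
    have hratio_mem : ∀ ω, 0 < G ω → Z ω / (G ω * F ω) ∈ A' := by
      intro ω hω
      refine Finset.mem_insert_of_mem (Finset.mem_image.mpr ⟨ω, Finset.mem_univ _, ?_⟩)
      rw [if_pos hω]
    have hA'nonneg : ∀ b ∈ A', 0 ≤ b := by
      intro b hb
      rcases Finset.mem_insert.mp hb with rfl | hb
      · exact le_refl 0
      · obtain ⟨ω, -, rfl⟩ := Finset.mem_image.mp hb
        split_ifs with h
        · exact div_nonneg (hZ ω) (mul_nonneg (hG ω) (hF ω).le)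
        · exact le_refl 0
    set a0 := A'.max' hA'ne with ha0
    have hca0 : c a0 ≤ x := by
      have hz : c a0 = 0 := by
        refine Finset.sum_eq_zero fun ω _ => ?_
        split_ifs with h
        · rcases (hG ω).lt_or_eq with hGω | hGω
          · exfalso
            have hGFpos : 0 < G ω * F ω := mul_pos hGω (hF ω)
            have hr := A'.le_max' _ (hratio_mem ω hGω)
            rw [div_le_iff₀ hGFpos] at hr
            linarith
          · rw [← hGω, zero_mul, mul_zero]
        · rfl
      rw [hz]; exact hx
    set B := A'.filter (fun a => c a ≤ x) with hB
    have hBne : B.Nonempty := ⟨a0, Finset.mem_filter.mpr ⟨A'.max'_mem hA'ne, hca0⟩⟩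
    set astar := B.min' hBne with hastar
    have hastarB : astar ∈ B := B.min'_mem hBne
    have hastarA' : astar ∈ A' := (Finset.mem_filter.mp hastarB).1
    have hb1 : c astar ≤ x := (Finset.mem_filter.mp hastarB).2
    have hastar0 : 0 ≤ astar := hA'nonneg _ hastarA'
    rcases hastar0.eq_or_lt with h0 | h0
    · -- astar = 0 : take ψ = indicator of {Z > 0}
      set ψ : Ω → ℝ := fun ω => if 0 < Z ω then 1 else 0 with hψdef
      have hc0 : c 0 ≤ x := by rw [h0]; exact hb1
      refine ⟨(1:ℝ), ⟨ψ, ?_, ?_, ?_⟩, ⟨0, le_refl 0, ?_⟩⟩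
      · intro ω
        simp only [hψdef, Set.mem_Icc]
        split_ifs <;> norm_num
      · have : (∑ ω, R ω * (G ω * F ω * ψ ω)) = c 0 := by
          refine Finset.sum_congr rfl fun ω _ => ?_
          simp only [hψdef, hc, zero_mul]
          split_ifs <;> ring
        rw [this]; exact hc0
      · symm
        rw [← hZ1]
        refine Finset.sum_congr rfl fun ω _ => ?_
        simp only [hψdef]
        split_ifs with h
        · ring
        · have : Z ω = 0 := le_antisymm (not_lt.mp h) (hZ ω)
          rw [this]; ring
      · have : ∀ ω, R ω * max (Z ω - 0 * (G ω * F ω)) 0 = R ω * Z ω := by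
          intro ω
          rw [zero_mul, sub_zero, max_eq_left (hZ ω)]
        rw [Finset.sum_congr rfl fun ω _ => this ω, hZ1]
        ring
    · -- astar > 0
      set b2 : ℝ := ∑ ω, if astar * (G ω * F ω) ≤ Z ω then R ω * (G ω * F ω) else 0 with hb2def
      set m : ℝ := ∑ ω, if Z ω = astar * (G ω * F ω) then R ω * (G ω * F ω) else 0 with hmdef
      have hsplit : b2 = c astar + m := by
        simp only [hb2def, hc, hmdef, ← Finset.sum_add_distrib]
        refine Finset.sum_congr rfl fun ω _ => ?_
        rcases lt_trichotomy (astar * (G ω * F ω)) (Z ω) with h | h | h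
        · rw [if_pos h.le, if_pos h, if_neg (ne_of_gt h), add_zero]
        · rw [if_pos h.le, if_neg (by rw [h]; exact lt_irrefl _), if_pos h.symm, zero_add]
        · rw [if_neg (not_le.mpr h), if_neg (not_lt.mpr h.le), if_neg (ne_of_lt h), add_zero]
      have hxb2 : x < b2 := by
        by_contra hle
        push_neg at hle
        set D := A'.filter (fun a => a < astar) with hD
        have hDne : D.Nonempty := ⟨0, Finset.mem_filter.mpr ⟨Finset.mem_insert_self _ _, h0⟩⟩
        set a' := D.max' hDne with ha'
        have ha'D : a' ∈ D := D.max'_mem hDne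
        have ha'lt : a' < astar := (Finset.mem_filter.mp ha'D).2
        have hca' : c a' ≤ b2 := by
          refine Finset.sum_le_sum fun ω _ => ?_
          split_ifs with h1 h2 h2
          · exact le_refl _
          · exfalso
            push_neg at h2
            rcases (hG ω).lt_or_eq with hGω | hGω
            · have hGFpos : 0 < G ω * F ω := mul_pos hGω (hF ω)
              have hr1 : a' < Z ω / (G ω * F ω) := (lt_div_iff₀ hGFpos).mpr h1
              have hr2 : Z ω / (G ω * F ω) < astar := (div_lt_iff₀ hGFpos).mpr h2
              have : Z ω / (G ω * F ω) ∈ D :=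
                Finset.mem_filter.mpr ⟨hratio_mem ω hGω, hr2⟩
              exact absurd (D.le_max' _ this) (not_le.mpr hr1)
            · rw [← hGω, zero_mul, mul_zero] at h2
              exact absurd (hZ ω) (not_le.mpr h2)
          · exact mul_nonneg (hR ω).le (mul_nonneg (hG ω) (hF ω).le)
          · exact le_refl _
        have ha'B : a' ∈ B :=
          Finset.mem_filter.mpr ⟨(Finset.mem_filter.mp ha'D).1, hca'.trans hle⟩
        exact absurd (B.min'_le _ ha'B) (not_le.mpr ha'lt)
      have hmpos : 0 < m := by
        have := hsplit
        linarith
      set γ : ℝ := (x - c astar) / m with hγdef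
      have hγ0 : 0 ≤ γ := div_nonneg (by linarith) hmpos.le
      have hγ1 : γ ≤ 1 := by
        rw [hγdef, div_le_one hmpos]
        linarith
      set ψ : Ω → ℝ := fun ω =>
        if astar * (G ω * F ω) < Z ω then 1
        else if Z ω = astar * (G ω * F ω) then γ else 0 with hψdef
      have hψbound : ∀ ω, ψ ω ∈ Set.Icc (0:ℝ) 1 := by
        intro ω
        simp only [hψdef, Set.mem_Icc]
        split_ifs
        · exact ⟨zero_le_one, le_refl 1⟩
        · exact ⟨hγ0, hγ1⟩
        · exact ⟨le_refl 0, zero_le_one⟩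
      have hbudget : (∑ ω, R ω * (G ω * F ω * ψ ω)) = x := by
        have hterm : ∀ ω, R ω * (G ω * F ω * ψ ω) =
            (if astar * (G ω * F ω) < Z ω then R ω * (G ω * F ω) else 0) +
            γ * (if Z ω = astar * (G ω * F ω) then R ω * (G ω * F ω) else 0) := by
          intro ω
          simp only [hψdef]
          split_ifs with h1 h2
          · exact absurd (h2 ▸ h1) (lt_irrefl _)
          · ring
          · ring
          · ring
        rw [Finset.sum_congr rfl fun ω _ => hterm ω, Finset.sum_add_distrib,
          ← Finset.mul_sum]
        show c astar + γ * m = x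
        rw [hγdef, div_mul_cancel₀ _ hmpos.ne']
        ring
      refine ⟨∑ ω, R ω * (Z ω * ψ ω), ⟨ψ, hψbound, hbudget.le, rfl⟩, ⟨astar, hastar0, ?_⟩⟩
      have hterm : ∀ ω, R ω * (Z ω * ψ ω) =
          R ω * max (Z ω - astar * (G ω * F ω)) 0 + astar * (R ω * (G ω * F ω * ψ ω)) := by
        intro ω
        rcases lt_trichotomy (astar * (G ω * F ω)) (Z ω) with h | h | h
        · simp only [hψdef, if_pos h]
          rw [max_eq_left (by linarith)]
          ring
        · have hne : ¬ astar * (G ω * F ω) < Z ω := by rw [h]; exact lt_irrefl _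
          simp only [hψdef, if_neg hne, if_pos h.symm]
          rw [← h, sub_self, max_self]
          ring
        · have hne : ¬ astar * (G ω * F ω) < Z ω := not_lt.mpr h.le
          have hne2 : Z ω ≠ astar * (G ω * F ω) := ne_of_lt h
          simp only [hψdef, if_neg hne, if_neg hne2]
          rw [max_eq_right (by linarith)]
          ring
      calc ∑ ω, R ω * (Z ω * ψ ω)
          = ∑ ω, (R ω * max (Z ω - astar * (G ω * F ω)) 0 +
              astar * (R ω * (G ω * F ω * ψ ω))) :=
            Finset.sum_congr rfl fun ω _ => hterm ω
        _ = (∑ ω, R ω * max (Z ω - astar * (G ω * F ω)) 0) +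
              astar * ∑ ω, R ω * (G ω * F ω * ψ ω) := by
            rw [Finset.sum_add_distrib, Finset.mul_sum]
        _ = x * astar + ∑ ω, R ω * max (Z ω - astar * (G ω * F ω)) 0 := by
            rw [hbudget]; ring
  obtain ⟨e, heP, heQ⟩ := strong
  exact le_antisymm
    (csSup_le hPne fun e' he' => le_csInf hQne fun f hf => weak e' he' f hf)
    ((csInf_le hQbdd heQ).trans (le_csSup hPbdd heP))
end

section
/- In the finite Neyman–Pearson problem with a single null Z and single alternative GF, an optimal test exists of the form ψ̂ = 1 on {Z > aGF} and ψ̂ = b on {Z = aGF} for some a ≥ 0 and b ∈ [0,1], i.e. there exist a ≥ 0, b ∈ [0,1] with E_R[GF·ψ̂] ≤ x and E_R[Z·ψ̂] ≥ E_R[Zψ] for every test ψ : Ω → [0,1] with E_R[GFψ] ≤ x. -/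
noncomputable def psihat {Ω : Type*} (Z h : Ω → ℝ) (a b : ℝ) (ω : Ω) : ℝ :=
  if a * h ω < Z ω then 1 else if Z ω = a * h ω then b else 0

noncomputable def Aa {Ω : Type*} [Fintype Ω] (R Z h : Ω → ℝ) (a : ℝ) : ℝ :=
  ∑ ω, if a * h ω < Z ω then R ω * h ω else 0

noncomputable def Bb {Ω : Type*} [Fintype Ω] (R Z h : Ω → ℝ) (a : ℝ) : ℝ :=
  ∑ ω, if Z ω = a * h ω then R ω * h ω else 0

noncomputable def Cc {Ω : Type*} [Fintype Ω] (R Z h : Ω → ℝ) (a : ℝ) : ℝ :=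
  ∑ ω, if a * h ω ≤ Z ω then R ω * h ω else 0

lemma budget_eq {Ω : Type*} [Fintype Ω] (R Z h : Ω → ℝ) (a b : ℝ) :
    ∑ ω, R ω * (h ω * psihat Z h a b ω) = Aa R Z h a + b * Bb R Z h a := by
  unfold Aa Bb
  rw [Finset.mul_sum, ← Finset.sum_add_distrib]
  refine Finset.sum_congr rfl fun ω _ => ?_
  unfold psihat
  split_ifs with h1 h2 <;> first | (exfalso; rw [h2] at h1; exact lt_irrefl _ h1) | ring

lemma ABC {Ω : Type*} [Fintype Ω] (R Z h : Ω → ℝ) (a : ℝ) :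
    Aa R Z h a + Bb R Z h a = Cc R Z h a := by
  unfold Aa Bb Cc
  rw [← Finset.sum_add_distrib]
  refine Finset.sum_congr rfl fun ω _ => ?_
  rcases lt_trichotomy (a * h ω) (Z ω) with hlt | heq | hgt
  · rw [if_pos hlt, if_neg (by linarith), if_pos hlt.le]; ring
  · rw [if_neg (by linarith), if_pos heq.symm, if_pos heq.le]; ring
  · rw [if_neg (by linarith), if_neg (by linarith), if_neg (by linarith)]; ring

lemma Cc0 {Ω : Type*} [Fintype Ω] (R Z h : Ω → ℝ) (hZ : ∀ ω, 0 ≤ Z ω) :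
    Cc R Z h 0 = ∑ ω, R ω * h ω := by
  unfold Cc
  exact Finset.sum_congr rfl fun ω _ => by rw [if_pos (by simpa using hZ ω)]

lemma Bnn {Ω : Type*} [Fintype Ω] (R Z h : Ω → ℝ) (hR : ∀ ω, 0 < R ω) (hh : ∀ ω, 0 ≤ h ω)
    (a : ℝ) : 0 ≤ Bb R Z h a :=
  Finset.sum_nonneg fun ω _ => by
    split_ifs
    · exact mul_nonneg (hR ω).le (hh ω)
    · exact le_rfl

lemma exists_ab {Ω : Type*} [Fintype Ω] (R Z h : Ω → ℝ) (hR : ∀ ω, 0 < R ω)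
    (hZ : ∀ ω, 0 ≤ Z ω) (hh : ∀ ω, 0 ≤ h ω) (x : ℝ) (hx0 : 0 ≤ x)
    (hxle : x ≤ ∑ ω, R ω * h ω) :
    ∃ a b : ℝ, 0 ≤ a ∧ b ∈ Set.Icc (0:ℝ) 1 ∧
      (∑ ω, R ω * (h ω * psihat Z h a b ω)) ≤ x ∧
      (a = 0 ∨ x ≤ ∑ ω, R ω * (h ω * psihat Z h a b ω)) := by
  by_cases hA0 : Aa R Z h 0 ≤ x
  · by_cases hB0 : Bb R Z h 0 = 0
    · refine ⟨0, 0, le_rfl, ⟨le_rfl, zero_le_one⟩, ?_, Or.inl rfl⟩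
      rw [budget_eq, hB0]; simpa using hA0
    · have hB0' : 0 < Bb R Z h 0 := (Bnn R Z h hR hh 0).lt_of_ne (Ne.symm hB0)
      have hsum : Aa R Z h 0 + Bb R Z h 0 = ∑ ω, R ω * h ω := by rw [ABC, Cc0 R Z h hZ]
      have hbud : ∑ ω, R ω * (h ω * psihat Z h 0 ((x - Aa R Z h 0)/Bb R Z h 0) ω) = x := by
        rw [budget_eq, div_mul_cancel₀ _ hB0]; ring
      exact ⟨0, (x - Aa R Z h 0)/Bb R Z h 0, le_rfl,
        ⟨div_nonneg (by linarith) hB0'.le, by rw [div_le_one hB0']; linarith⟩,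
        hbud.le, Or.inr hbud.ge⟩
  · push_neg at hA0
    set S : Finset ℝ := (Finset.univ.filter fun ω => 0 < h ω).image (fun ω => Z ω / h ω)
      with hS
    have hmemS : ∀ ω, 0 < h ω → Z ω / h ω ∈ S := fun ω hpos =>
      Finset.mem_image.2 ⟨ω, Finset.mem_filter.2 ⟨Finset.mem_univ _, hpos⟩, rfl⟩
    have hSne : S.Nonempty := by
      by_contra hemp
      rw [Finset.not_nonempty_iff_eq_empty] at hemp
      have hz : ∀ ω : Ω, h ω = 0 := by
        intro ω
        by_contra hne
        have hpos : 0 < h ω := (hh ω).lt_of_ne (Ne.symm hne)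
        have := hmemS ω hpos
        rw [hemp] at this
        exact absurd this (Finset.notMem_empty _)
      have : Aa R Z h 0 = 0 := Finset.sum_eq_zero fun ω _ => by rw [hz ω, mul_zero]; simp
      linarith
    have hmaxA : Aa R Z h (S.max' hSne) ≤ x := by
      have : Aa R Z h (S.max' hSne) = 0 := Finset.sum_eq_zero fun ω _ => by
        rcases (hh ω).eq_or_lt with h0 | hpos
        · rw [← h0, mul_zero]; simp
        · have hle : Z ω / h ω ≤ S.max' hSne := S.le_max' _ (hmemS ω hpos)
          rw [if_neg (not_lt.2 ((div_le_iff₀ hpos).1 hle))]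
      linarith
    set T := S.filter (fun t => Aa R Z h t ≤ x) with hT
    have hTne : T.Nonempty := ⟨S.max' hSne, Finset.mem_filter.2 ⟨S.max'_mem hSne, hmaxA⟩⟩
    set a := T.min' hTne with ha_def
    have haT : a ∈ T := T.min'_mem hTne
    have haS : a ∈ S := (Finset.mem_filter.1 haT).1
    have hAa : Aa R Z h a ≤ x := (Finset.mem_filter.1 haT).2
    have ha0 : 0 ≤ a := by
      obtain ⟨ω, hω, heq⟩ := Finset.mem_image.1 haS
      rw [← heq]
      exact div_nonneg (hZ ω) (hh ω)
    have hxC : x < Cc R Z h a := by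
      by_cases hS' : (S.filter (· < a)).Nonempty
      · set s := (S.filter (· < a)).max' hS' with hs_def
        have hsmem := (S.filter (· < a)).max'_mem hS'
        rw [Finset.mem_filter] at hsmem
        have hsx : x < Aa R Z h s := by
          by_contra hle
          push_neg at hle
          have hsT : s ∈ T := Finset.mem_filter.2 ⟨hsmem.1, hle⟩
          have := T.min'_le s hsT
          rw [← ha_def] at this
          exact absurd hsmem.2 (not_lt.2 this)
        refine lt_of_lt_of_le hsx (Finset.sum_le_sum fun ω _ => ?_)
        by_cases hc : s * h ω < Z ω
        · rw [if_pos hc, if_pos ?_]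
          rcases (hh ω).eq_or_lt with h0 | hpos
          · rw [← h0, mul_zero]; exact hZ ω
          · have hr : Z ω / h ω ∈ S := hmemS ω hpos
            have hrs : s < Z ω / h ω := (lt_div_iff₀ hpos).2 hc
            have har : a ≤ Z ω / h ω := by
              by_contra hlt
              push_neg at hlt
              have hmem : Z ω / h ω ∈ S.filter (· < a) := Finset.mem_filter.2 ⟨hr, hlt⟩
              have := (S.filter (· < a)).le_max' _ hmem
              rw [← hs_def] at this
              linarith
            exact (le_div_iff₀ hpos).1 har
        · rw [if_neg hc]
          split_ifs
          · exact mul_nonneg (hR ω).le (hh ω)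
          · exact le_rfl
      · refine lt_of_lt_of_le hA0 (Finset.sum_le_sum fun ω _ => ?_)
        by_cases hc : 0 * h ω < Z ω
        · rw [if_pos hc, if_pos ?_]
          rcases (hh ω).eq_or_lt with h0 | hpos
          · rw [← h0, mul_zero]; exact hZ ω
          · have hr : Z ω / h ω ∈ S := hmemS ω hpos
            have har : a ≤ Z ω / h ω := by
              by_contra hlt
              push_neg at hlt
              exact hS' ⟨_, Finset.mem_filter.2 ⟨hr, hlt⟩⟩
            exact (le_div_iff₀ hpos).1 har
        · rw [if_neg hc]
          split_ifs
          · exact mul_nonneg (hR ω).le (hh ω)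
          · exact le_rfl
    have hABC := ABC R Z h a
    have hBpos : 0 < Bb R Z h a := by linarith
    have hbud : ∑ ω, R ω * (h ω * psihat Z h a ((x - Aa R Z h a)/Bb R Z h a) ω) = x := by
      rw [budget_eq, div_mul_cancel₀ _ hBpos.ne']; ring
    exact ⟨a, (x - Aa R Z h a)/Bb R Z h a, ha0,
      ⟨div_nonneg (by linarith) hBpos.le, by rw [div_le_one hBpos]; linarith⟩,
      hbud.le, Or.inr hbud.ge⟩
-- optimality lemma
lemma npopt {Ω : Type*} [Fintype Ω] (R Z h : Ω → ℝ) (hR : ∀ ω, 0 < R ω)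
    (x a b : ℝ) (ha : 0 ≤ a)
    (hkey : a = 0 ∨ x ≤ ∑ ω, R ω * (h ω * psihat Z h a b ω)) :
    ∀ ψ : Ω → ℝ, (∀ ω, ψ ω ∈ Set.Icc (0:ℝ) 1) → (∑ ω, R ω * (h ω * ψ ω)) ≤ x →
    (∑ ω, R ω * (Z ω * ψ ω)) ≤ ∑ ω, R ω * (Z ω * psihat Z h a b ω) := by
  intro ψ hψ hψx
  have key : ∀ ω ∈ Finset.univ, R ω * (Z ω * ψ ω) + a * (R ω * (h ω * psihat Z h a b ω)) ≤
      R ω * (Z ω * psihat Z h a b ω) + a * (R ω * (h ω * ψ ω)) := by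
    intro ω _
    have h1 := (hψ ω).1
    have h2 := (hψ ω).2
    have h3 := (hR ω).le
    unfold psihat
    split_ifs with hc1 hc2
    · nlinarith [mul_nonneg h3 (mul_nonneg (sub_nonneg.2 hc1.le) (sub_nonneg.2 h2))]
    · rw [hc2]; nlinarith
    · push_neg at hc1
      nlinarith [mul_nonneg h3 (mul_nonneg (sub_nonneg.2 hc1) h1)]
  have hsum := Finset.sum_le_sum key
  rw [Finset.sum_add_distrib, Finset.sum_add_distrib, ← Finset.mul_sum, ← Finset.mul_sum] at hsum
  rcases hkey with h0 | hx
  · subst h0; simp at hsum; linarith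
  · nlinarith [mul_le_mul_of_nonneg_left hψx ha, mul_le_mul_of_nonneg_left hx ha]

theorem stmt_15 {Ω : Type*} [Fintype Ω] [Nonempty Ω] (R Z G F : Ω → ℝ)
    (hR : ∀ ω, 0 < R ω) (hRsum : ∑ ω, R ω = 1)
    (hZ : ∀ ω, 0 ≤ Z ω) (hG : ∀ ω, 0 ≤ G ω) (hF : ∀ ω, 0 < F ω)
    (x : ℝ) (hx0 : 0 ≤ x) (hxle : x ≤ ∑ ω, R ω * (G ω * F ω)) :
    ∃ a b : ℝ, 0 ≤ a ∧ b ∈ Set.Icc (0 : ℝ) 1 ∧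
      (∑ ω, R ω * (G ω * F ω *
        (if a * (G ω * F ω) < Z ω then 1 else if Z ω = a * (G ω * F ω) then b else 0))) ≤ x ∧
      ∀ ψ : Ω → ℝ, (∀ ω, ψ ω ∈ Set.Icc (0 : ℝ) 1) →
        (∑ ω, R ω * (G ω * F ω * ψ ω)) ≤ x →
        (∑ ω, R ω * (Z ω * ψ ω)) ≤ ∑ ω, R ω * (Z ω *
          (if a * (G ω * F ω) < Z ω then 1 else if Z ω = a * (G ω * F ω) then b else 0)) := by
  have hh : ∀ ω, 0 ≤ G ω * F ω := fun ω => mul_nonneg (hG ω) (hF ω).le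
  obtain ⟨a, b, ha, hb, hbud, hkey⟩ :=
    exists_ab R Z (fun ω => G ω * F ω) hR hZ hh x hx0 hxle
  exact ⟨a, b, ha, hb, hbud, npopt R Z (fun ω => G ω * F ω) hR x a b ha hkey⟩
end
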